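/- arXiv:1510.03999 — 2 statements merged into one kernel-verified Lean document; each statement's English description precedes it below -/
import Mathlib

section
/- Let k, R > 0, let n, m be integers, and let h : ℝ → ℝ be continuous and 2π-periodic. For real δ with |δ| · sup_θ |h(θ)| < R define G(δ) := ∫₀^{2π} ∫₀^{R+δh(θ)} J_n(kr)·J_m(kr)·e^{i(n−m)θ} · r dr dθ. Then there exist constants C > 0 and δ₀ > 0 such that for all real δ with |δ| ≤ δ₀, |G(δ) − G(0) − 2π R δ · J_n(kR)·J_m(kR)·𝔉[h](n−m)| ≤ C·δ². -/
open Real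

/-- Bessel function of the first kind of nonnegative integer order `n`. -/
noncomputable def besselJnat (n : ℕ) (x : ℝ) : ℝ :=
  ∑' j : ℕ, ((-1 : ℝ) ^ j / (Nat.factorial j * Nat.factorial (j + n))) * (x / 2) ^ (2 * j + n)

/-- Bessel function of the first kind of integer order: `J_{-n} = (-1)^n J_n`. -/
noncomputable def besselJ (n : ℤ) (x : ℝ) : ℝ :=
  if 0 ≤ n then besselJnat n.toNat x else (-1 : ℝ) ^ n.natAbs * besselJnat n.natAbs x

/-- The `p`-th Fourier coefficient `𝔉[h](p) = (1/2π) ∫₀^{2π} h(θ) e^{ipθ} dθ`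
of a `2π`-periodic function `h`. -/
noncomputable def fourierCoeff' (h : ℝ → ℝ) (p : ℤ) : ℂ :=
  (1 / (2 * π) : ℂ) * ∫ θ in (0:ℝ)..(2 * π), (h θ : ℂ) * Complex.exp (Complex.I * (p : ℂ) * (θ : ℂ))

/-! Write `F(r) = J_n(kr) J_m(kr) r` and `P` for its primitive. The inner integral is
`P(R + δ h(θ))` times the phase `e^{i(n-m)θ}`, so `G(δ) - G(0)` minus the linear term is the
integral over `θ` of the phase times the first-order Taylor remainder of `P` at `R`, evaluated at
`s = δ h(θ)`. The Bessel functions are sums of entire power series, so `F` is differentiable and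
this remainder is `O(s²)`; since `h` is bounded on `[0, 2π]`, it is `O(δ²)` uniformly in `θ`. -/

open Filter Topology Asymptotics MeasureTheory Set FormalMultilinearSeries

noncomputable def besselCoeff (n j : ℕ) : ℝ :=
  (-1) ^ j / (j.factorial * (j + n).factorial)

lemma radius_ofScalars_besselCoeff (n : ℕ) : (ofScalars ℝ (besselCoeff n)).radius = ⊤ := by
  refine radius_eq_top_of_summable_norm _ fun r => ?_
  refine (Real.summable_pow_div_factorial r).of_nonneg_of_le (fun j => by positivity) fun j => ?_
  rw [ofScalars_norm, besselCoeff, norm_div, norm_pow, norm_neg, norm_one, one_pow,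
    div_mul_eq_mul_div, one_mul, Real.norm_of_nonneg (by positivity)]
  gcongr
  exact le_mul_of_one_le_right (by positivity) (mod_cast (j + n).factorial_pos)

lemma besselJnat_eq_ofScalarsSum (n : ℕ) (x : ℝ) :
    besselJnat n x = (x / 2) ^ n * ofScalarsSum (besselCoeff n) ((x / 2) ^ 2) := by
  rw [ofScalars_sum_eq, besselJnat, ← tsum_mul_left]
  congr 1 with j
  rw [besselCoeff, smul_eq_mul, ← pow_mul, pow_add]
  ring

lemma differentiable_ofScalarsSum_besselCoeff (n : ℕ) :
    Differentiable ℝ (ofScalarsSum (E := ℝ) (besselCoeff n)) := by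
  have hp := (ofScalars ℝ (besselCoeff n)).hasFPowerSeriesOnBall
    (by simp [radius_ofScalars_besselCoeff])
  rw [radius_ofScalars_besselCoeff] at hp
  have hd := hp.differentiableOn
  rw [Metric.eball_top, differentiableOn_univ] at hd
  exact hd

lemma differentiable_besselJnat (n : ℕ) : Differentiable ℝ (besselJnat n) := by
  have hsum := differentiable_ofScalarsSum_besselCoeff n
  simp only [funext (besselJnat_eq_ofScalarsSum n)]
  fun_prop

lemma differentiable_besselJ (p : ℤ) : Differentiable ℝ (besselJ p) := by
  unfold besselJ
  split_ifs
  · exact differentiable_besselJnat _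
  · exact (differentiable_besselJnat _).const_mul _

theorem isBigO_integral_add_sub_integral_sub_smul {E : Type*} [NormedAddCommGroup E]
    [NormedSpace ℝ E] [CompleteSpace E] {f : ℝ → E} {c a : ℝ} (hf : Continuous f)
    (hfa : (f · - f a) =O[𝓝 a] (· - a)) :
    (fun s => (∫ r in c..a + s, f r) - (∫ r in c..a, f r) - s • f a) =O[𝓝 0] (· ^ 2) := by
  obtain ⟨K, hK0, hK⟩ := hfa.exists_pos
  obtain ⟨ε, hε, hloc⟩ := Metric.eventually_nhds_iff.mp hK.bound
  refine IsBigO.of_bound K (Metric.eventually_nhds_iff.mpr ⟨ε, hε, fun {s} hs => ?_⟩)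
  rw [Real.dist_0_eq_abs] at hs
  have hrem : (∫ r in c..a + s, f r) - (∫ r in c..a, f r) - s • f a
      = ∫ r in a..a + s, (f r - f a) := by
    rw [intervalIntegral.integral_interval_sub_left (hf.intervalIntegrable _ _)
      (hf.intervalIntegrable _ _), intervalIntegral.integral_sub (hf.intervalIntegrable _ _)
      intervalIntegrable_const, intervalIntegral.integral_const, add_sub_cancel_left]
  have hbound : ∀ r ∈ uIoc a (a + s), ‖f r - f a‖ ≤ K * |s| := by
    intro r hr
    have hra : |r - a| ≤ |s| := by
      simpa using abs_sub_left_of_mem_uIcc (uIoc_subset_uIcc hr)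
    calc ‖f r - f a‖ ≤ K * ‖r - a‖ := hloc (by rw [Real.dist_eq]; exact hra.trans_lt hs)
      _ ≤ K * |s| := by rw [Real.norm_eq_abs]; exact mul_le_mul_of_nonneg_left hra hK0.le
  calc ‖(∫ r in c..a + s, f r) - (∫ r in c..a, f r) - s • f a‖
      ≤ K * |s| * |a + s - a| := by
        rw [hrem]; exact intervalIntegral.norm_integral_le_of_norm_le_const hbound
    _ = K * ‖s ^ 2‖ := by rw [add_sub_cancel_left, norm_pow, Real.norm_eq_abs]; ring

theorem isBigO_intervalIntegral_mul_comp_mul {q : ℝ → ℂ} (hq : q =O[𝓝 0] (· ^ 2))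
    {w : ℝ → ℂ} {h : ℝ → ℝ} {a b : ℝ} (hw : ContinuousOn w (uIcc a b))
    (hh : ContinuousOn h (uIcc a b)) :
    (fun δ => ∫ θ in a..b, w θ * q (δ * h θ)) =O[𝓝 0] (· ^ 2) := by
  obtain ⟨W, hW⟩ := isCompact_uIcc.exists_bound_of_continuousOn hw
  obtain ⟨H, hH⟩ := isCompact_uIcc.exists_bound_of_continuousOn hh
  obtain ⟨K, hK0, hK⟩ := hq.exists_pos
  obtain ⟨ε, hε, hloc⟩ := Metric.eventually_nhds_iff.mp hK.bound
  have hH0 : 0 < |H| + 1 := by positivity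
  refine IsBigO.of_bound (W * (K * H ^ 2) * |b - a|)
    (Metric.eventually_nhds_iff.mpr ⟨ε / (|H| + 1), by positivity, fun {δ} hδ => ?_⟩)
  rw [Real.dist_0_eq_abs, lt_div_iff₀ hH0] at hδ
  have hbound : ∀ θ ∈ uIoc a b, ‖w θ * q (δ * h θ)‖ ≤ W * (K * H ^ 2 * δ ^ 2) := by
    intro θ hθ
    have hhθ : |h θ| ≤ |H| := (hH θ (uIoc_subset_uIcc hθ)).trans (le_abs_self H)
    have hsmall : |δ * h θ| < ε := by
      rw [abs_mul]
      calc |δ| * |h θ| ≤ |δ| * (|H| + 1) := by gcongr; linarith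
        _ < ε := hδ
    have hq' : ‖q (δ * h θ)‖ ≤ K * H ^ 2 * δ ^ 2 := by
      calc ‖q (δ * h θ)‖ ≤ K * ‖(δ * h θ) ^ 2‖ := hloc (by rwa [Real.dist_0_eq_abs])
        _ = K * (h θ ^ 2 * δ ^ 2) := by rw [norm_pow, Real.norm_eq_abs, sq_abs]; ring
        _ ≤ K * (H ^ 2 * δ ^ 2) := by
          have := sq_le_sq.mpr hhθ
          gcongr
        _ = K * H ^ 2 * δ ^ 2 := by ring
    rw [norm_mul]
    exact mul_le_mul (hW θ (uIoc_subset_uIcc hθ)) hq' (norm_nonneg _)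
      ((norm_nonneg _).trans (hW θ (uIoc_subset_uIcc hθ)))
  calc ‖∫ θ in a..b, w θ * q (δ * h θ)‖ ≤ W * (K * H ^ 2 * δ ^ 2) * |b - a| :=
        intervalIntegral.norm_integral_le_of_norm_le_const hbound
    _ = W * (K * H ^ 2) * |b - a| * ‖δ ^ 2‖ := by
        rw [norm_pow, Real.norm_eq_abs, sq_abs]; ring

theorem exists_pos_forall_abs_le_of_isBigO {E F : Type*} [Norm E] [SeminormedAddCommGroup F]
    {f : ℝ → E} {g : ℝ → F} (hfg : f =O[𝓝 0] g) :
    ∃ C > 0, ∃ δ₀ > 0, ∀ δ : ℝ, |δ| ≤ δ₀ → ‖f δ‖ ≤ C * ‖g δ‖ := by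
  obtain ⟨C, hC, hCb⟩ := hfg.exists_pos
  obtain ⟨ε, hε, hloc⟩ := Metric.eventually_nhds_iff.mp hCb.bound
  refine ⟨C, hC, ε / 2, half_pos hε, fun δ hδ => hloc ?_⟩
  rw [Real.dist_0_eq_abs]
  linarith

theorem isBigO_integral_integral_add_mul_sub {F w : ℝ → ℂ} {h : ℝ → ℝ} {R a b : ℝ}
    (hF : Continuous F) (hFR : DifferentiableAt ℝ F R) (hw : Continuous w) (hh : Continuous h) :
    (fun δ => (∫ θ in a..b, ∫ r in (0:ℝ)..R + δ * h θ, F r * w θ)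
        - (∫ θ in a..b, ∫ r in (0:ℝ)..R, F r * w θ)
        - δ * F R * ∫ θ in a..b, h θ * w θ) =O[𝓝 0] (· ^ 2) := by
  have hq := isBigO_integral_add_sub_integral_sub_smul (c := 0) hF hFR.isBigO_sub
  refine (isBigO_intervalIntegral_mul_comp_mul (a := a) (b := b) hq hw.continuousOn
    hh.continuousOn).congr_left fun δ => ?_
  have hP : Continuous fun x => ∫ r in (0:ℝ)..x, F r :=
    intervalIntegral.continuous_primitive (hF.intervalIntegrable) 0
  have i₁ : IntervalIntegrable (fun θ => (∫ r in (0:ℝ)..R + δ * h θ, F r) * w θ) volume a b :=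
    ((hP.comp (continuous_const.add (continuous_const.mul hh))).mul hw).intervalIntegrable _ _
  have i₂ : IntervalIntegrable (fun θ => (∫ r in (0:ℝ)..R, F r) * w θ) volume a b :=
    (continuous_const.mul hw).intervalIntegrable _ _
  have i₃ : IntervalIntegrable (fun θ => (δ : ℂ) * F R * (h θ * w θ)) volume a b :=
    (continuous_const.mul ((Complex.continuous_ofReal.comp hh).mul hw)).intervalIntegrable _ _
  simp only [intervalIntegral.integral_mul_const]
  rw [← intervalIntegral.integral_const_mul, ← intervalIntegral.integral_sub i₁ i₂,
    ← intervalIntegral.integral_sub (i₁.sub i₂) i₃]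
  refine intervalIntegral.integral_congr fun θ _ => ?_
  simp only [Complex.real_smul]
  push_cast
  ring

theorem two_pi_mul_fourierCoeff' (h : ℝ → ℝ) (p : ℤ) :
    2 * π * fourierCoeff' h p
      = ∫ θ in (0:ℝ)..(2 * π), (h θ : ℂ) * Complex.exp (Complex.I * (p : ℂ) * (θ : ℂ)) := by
  rw [fourierCoeff', ← mul_assoc, mul_one_div_cancel (by exact_mod_cast two_pi_pos.ne'), one_mul]

theorem scattering_coefficient_expansion_general (k R : ℝ) (n m : ℤ)
    (h : ℝ → ℝ) (hcont : Continuous h)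
    (G : ℝ → ℂ)
    (hG : ∀ δ : ℝ, G δ = ∫ θ in (0:ℝ)..(2 * π),
        ∫ r in (0:ℝ)..(R + δ * h θ),
          ((besselJ n (k * r) : ℂ) * (besselJ m (k * r) : ℂ)) *
            Complex.exp (Complex.I * ((n : ℂ) - (m : ℂ)) * (θ : ℂ)) * (r : ℂ)) :
    ∃ C > 0, ∃ δ₀ > 0, ∀ δ : ℝ, |δ| ≤ δ₀ →
      ‖G δ - G 0 - 2 * π * R * δ * ((besselJ n (k * R) : ℂ) * (besselJ m (k * R) : ℂ)) *
          fourierCoeff' h (n - m)‖ ≤ C * δ ^ 2 := by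
  set F : ℝ → ℂ := fun r => (besselJ n (k * r) : ℂ) * besselJ m (k * r) * r
  set w : ℝ → ℂ := fun θ => Complex.exp (Complex.I * ((n : ℂ) - m) * θ)
  have hF : Differentiable ℝ F := by
    have := differentiable_besselJ n
    have := differentiable_besselJ m
    fun_prop
  have hG' : ∀ δ, G δ = ∫ θ in (0:ℝ)..(2 * π), ∫ r in (0:ℝ)..R + δ * h θ, F r * w θ :=
    fun δ => by simp only [hG, F, w, mul_right_comm _ (Complex.exp _)]
  have hlin : ∀ δ : ℝ, 2 * π * R * δ * ((besselJ n (k * R) : ℂ) * (besselJ m (k * R) : ℂ)) *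
      fourierCoeff' h (n - m) = δ * F R * ∫ θ in (0:ℝ)..(2 * π), h θ * w θ := fun δ => by
    calc _ = R * δ * ((besselJ n (k * R) : ℂ) * besselJ m (k * R)) *
          (2 * π * fourierCoeff' h (n - m)) := by ring
      _ = _ := by rw [two_pi_mul_fourierCoeff']; push_cast; ring
  obtain ⟨C, hC, δ₀, hδ₀, hbound⟩ := exists_pos_forall_abs_le_of_isBigO
    (isBigO_integral_integral_add_mul_sub (a := 0) (b := 2 * π) hF.continuous (hF R)
      (show Continuous w by fun_prop) hcont)
  refine ⟨C, hC, δ₀, hδ₀, fun δ hδ => ?_⟩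
  simpa [hG', hlin] using hbound δ hδ

/-- First-order expansion of the Born scattering-coefficient integral of a radially
perturbed disk: `G(δ) = G(0) + 2πRδ · J_n(kR)J_m(kR)·𝔉[h](n−m) + O(δ²)`. -/
theorem scattering_coefficient_expansion (k R : ℝ) (hk : 0 < k) (hR : 0 < R) (n m : ℤ)
    (h : ℝ → ℝ) (hcont : Continuous h) (hper : ∀ θ : ℝ, h (θ + 2 * π) = h θ)
    (G : ℝ → ℂ)
    (hG : ∀ δ : ℝ, G δ = ∫ θ in (0:ℝ)..(2 * π),
        ∫ r in (0:ℝ)..(R + δ * h θ),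
          ((besselJ n (k * r) : ℂ) * (besselJ m (k * r) : ℂ)) *
            Complex.exp (Complex.I * ((n : ℂ) - (m : ℂ)) * (θ : ℂ)) * (r : ℂ)) :
    ∃ C > 0, ∃ δ₀ > 0, ∀ δ : ℝ, |δ| ≤ δ₀ →
      ‖G δ - G 0 - 2 * π * R * δ * ((besselJ n (k * R) : ℂ) * (besselJ m (k * R) : ℂ)) *
          fourierCoeff' h (n - m)‖ ≤ C * δ ^ 2 :=
  scattering_coefficient_expansion_general k R n m h hcont G hG
end

section
/- Let k, R > 0, let ε, δ, θ_d, θ_x be real numbers, and let (c_l)_{l∈ℤ} be a bounded sequence of complex numbers. For integers n, m define W_{nm} := π ε k² R² · δ_{nm} · (J_n(kR)² − J_{n−1}(kR)·J_{n+1}(kR)) + 2π R δ ε k² · J_n(kR)·J_m(kR) · c_{n−m}. Then the double series Σ_{n,m∈ℤ} i^{m−n} · e^{−imθ_d} · e^{inθ_x} · W_{nm} converges absolutely and equals π R² ε k² · (J_0(b) + J_2(b)) + 2π R δ ε k² · Σ_{l∈ℤ} e^{il(θ_x+θ_d)/2} · J_l(b) · c_l, where b := 2kR·sin((θ_x−θ_d)/2).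 -/
/-!
Write `u = kR`, `α = θ_x - θ_d` and `b = 2u sin(α/2)`. Since `|J_n(u)| ≤ C (|u|/2)^|n| / |n|!`,
the coefficients `J_n(u)` are absolutely summable and the double series converges absolutely, so
it may be summed along the diagonals `n - m = l`. The sum along a diagonal is the Bessel
correlation `∑_m J_{m+l}(u) J_m(u) e^{imα}`, which Graf's addition theorem evaluates as
`i^l e^{-ilα/2} J_l(b)`; the term `J_n² - J_{n-1} J_{n+1}` on the main diagonal gives
`J_0(b) + J_2(b)` by the cases `l = 0, 2`.

Graf's theorem follows by computing the Fourier coefficients of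
`e^{iu sin t} e^{iu sin(α - t)} = e^{ib sin(t + π/2 - α/2)}` in two ways, expanding each factor by
the Jacobi–Anger formula `e^{ix sin t} = ∑_n J_n(x) e^{int}`, itself the generating function
identity `e^{x(z - z⁻¹)/2} = ∑_n J_n(x) zⁿ` obtained by multiplying the exponential series of
`e^{xz/2}` and `e^{-x/(2z)}`.
-/

open Real

open scoped Complex
open Complex (I)

lemma norm_besselJnat_term_le (n j : ℕ) (x : ℝ) :
    ‖(-1 : ℝ) ^ j / (j.factorial * (j + n).factorial) * (x / 2) ^ (2 * j + n)‖
      ≤ (|x| / 2) ^ n / n.factorial * (((|x| / 2) ^ 2) ^ j / j.factorial) := by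
  have hfac : (n.factorial : ℝ) ≤ (j + n).factorial :=
    Nat.cast_le.mpr (Nat.factorial_le (Nat.le_add_left n j))
  simp only [Real.norm_eq_abs, abs_mul, abs_div, abs_pow, abs_neg, abs_one, one_pow, abs_two,
    Nat.abs_cast]
  calc _ = (|x| / 2) ^ n / (j + n).factorial * ((|x| / 2) ^ (2 * j) / j.factorial) := by ring
    _ ≤ _ := by rw [pow_mul]; gcongr

lemma hasSum_besselJnat (n : ℕ) (x : ℝ) :
    HasSum (fun j : ℕ =>
      (-1 : ℝ) ^ j / (j.factorial * (j + n).factorial) * (x / 2) ^ (2 * j + n)) (besselJnat n x) :=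
  (Summable.of_norm_bounded ((Real.summable_pow_div_factorial _).mul_left _)
    (norm_besselJnat_term_le n · x)).hasSum

lemma Real.hasSum_pow_div_factorial (y : ℝ) :
    HasSum (fun j : ℕ => y ^ j / j.factorial) (Real.exp y) := by
  simpa [Real.exp_eq_exp_ℝ] using NormedSpace.expSeries_div_hasSum_exp y

lemma Complex.hasSum_pow_div_factorial (w : ℂ) :
    HasSum (fun a : ℕ => w ^ a / a.factorial) (cexp w) := by
  simpa [Complex.exp_eq_exp_ℂ] using NormedSpace.expSeries_div_hasSum_exp w

lemma abs_besselJnat_le (n : ℕ) (x : ℝ) :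
    |besselJnat n x| ≤ (|x| / 2) ^ n / n.factorial * Real.exp ((|x| / 2) ^ 2) :=
  tsum_of_norm_bounded ((Real.hasSum_pow_div_factorial _).mul_left _)
    (norm_besselJnat_term_le n · x)

lemma besselJ_natCast (n : ℕ) (x : ℝ) : besselJ n x = besselJnat n x := by
  simp [besselJ]

lemma besselJ_negSucc (n : ℕ) (x : ℝ) :
    besselJ (Int.negSucc n) x = (-1) ^ (n + 1) * besselJnat (n + 1) x := by
  simp [besselJ]

lemma abs_besselJ_le (n : ℤ) (x : ℝ) :
    |besselJ n x| ≤ (|x| / 2) ^ n.natAbs / n.natAbs.factorial * Real.exp ((|x| / 2) ^ 2) := by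
  rcases n with n | n
  · simpa [besselJ_natCast] using abs_besselJnat_le n x
  · simpa [besselJ_negSucc, abs_mul] using abs_besselJnat_le (n + 1) x

lemma summable_norm_besselJ (x : ℝ) : Summable fun n : ℤ => ‖besselJ n x‖ := by
  have h := (Real.summable_pow_div_factorial (|x| / 2)).mul_right (Real.exp ((|x| / 2) ^ 2))
  refine .of_nat_of_neg ?_ ?_ <;> refine .of_nonneg_of_le (fun _ => norm_nonneg _) (fun n => ?_) h
  · simpa using abs_besselJ_le n x
  · simpa using abs_besselJ_le (-n) x

lemma hasSum_besselJnat_mul_pow (n : ℕ) (x : ℝ) {w₁ w₂ : ℂ} (hw : w₁ * w₂ = -1) :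
    HasSum (fun j : ℕ => (x * w₁ / 2) ^ (j + n) / (j + n).factorial *
      ((x * w₂ / 2) ^ j / j.factorial)) (besselJnat n x * w₁ ^ n) := by
  refine ((Complex.ofRealCLM.hasSum (hasSum_besselJnat n x)).mul_right (w₁ ^ n)).congr_fun
    fun j => ?_
  have hpow : (x * w₁ / 2) ^ (j + n) * (x * w₂ / 2) ^ j =
      (x / 2) ^ (2 * j + n) * (-1) ^ j * w₁ ^ n := by
    rw [← hw]; ring
  simp only [Complex.ofRealCLM_apply]
  push_cast
  rw [div_mul_div_comm, mul_comm ((j + n).factorial : ℂ), hpow]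
  ring

/-- `(n, j)` goes to the `j`-th pair `(a, b)` with `a - b = n`. -/
def intProdNatEquivNatProdNat : ℤ × ℕ ≃ ℕ × ℕ where
  toFun p := (p.2 + p.1.toNat, p.2 + (-p.1).toNat)
  invFun q := ((q.1 : ℤ) - q.2, min q.1 q.2)
  left_inv := by rintro ⟨n, j⟩; ext <;> simp; omega
  right_inv := by rintro ⟨a, b⟩; ext <;> simp <;> omega

lemma intProdNatEquivNatProdNat_natCast (p j : ℕ) :
    intProdNatEquivNatProdNat (p, j) = (j + p, j) := by
  simp [intProdNatEquivNatProdNat]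

lemma intProdNatEquivNatProdNat_negSucc (q j : ℕ) :
    intProdNatEquivNatProdNat (Int.negSucc q, j) = (j, j + (q + 1)) := by
  simp [intProdNatEquivNatProdNat]

theorem hasSum_besselJ_mul_zpow (x : ℝ) {z : ℂ} (hz : z ≠ 0) :
    HasSum (fun n : ℤ => (besselJ n x : ℂ) * z ^ n) (cexp (x / 2 * (z - z⁻¹))) := by
  have hprod := (Complex.hasSum_pow_div_factorial (x * z / 2)).mul
    (Complex.hasSum_pow_div_factorial (x * -z⁻¹ / 2))
    ((NormedSpace.norm_expSeries_div_summable (𝔸 := ℂ) _).mul_norm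
      (NormedSpace.norm_expSeries_div_summable (𝔸 := ℂ) _)).of_norm
  rw [← Complex.exp_add, show x * z / 2 + x * -z⁻¹ / 2 = x / 2 * (z - z⁻¹) by ring] at hprod
  refine (intProdNatEquivNatProdNat.hasSum_iff.mpr hprod).prod_fiberwise fun n => ?_
  rcases n with p | q
  · rw [Int.ofNat_eq_natCast, besselJ_natCast, zpow_natCast]
    refine (hasSum_besselJnat_mul_pow p x (w₁ := z) (w₂ := -z⁻¹)
      (by field_simp)).congr_fun fun j => ?_
    simp only [Function.comp_apply, intProdNatEquivNatProdNat_natCast]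
  · have h := hasSum_besselJnat_mul_pow (q + 1) x (w₁ := -z⁻¹) (w₂ := z) (by field_simp)
    rw [neg_pow, inv_pow, ← mul_assoc, mul_comm (besselJnat _ x : ℂ)] at h
    rw [besselJ_negSucc, zpow_negSucc]
    push_cast
    refine h.congr_fun fun j => ?_
    simp only [Function.comp_apply, intProdNatEquivNatProdNat_negSucc, mul_comm]

theorem hasSum_besselJ_mul_exp (x t : ℝ) :
    HasSum (fun n : ℤ => (besselJ n x : ℂ) * cexp (I * n * t)) (cexp (I * x * Real.sin t)) := by
  have h := hasSum_besselJ_mul_zpow x (Complex.exp_ne_zero (I * t))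
  rw [← Complex.exp_neg] at h
  convert h using 2 with n
  · rw [← Complex.exp_int_mul]; ring_nf
  · rw [Complex.ofReal_sin, Complex.sin, neg_mul, mul_comm (t : ℂ) I]
    linear_combination ((x : ℂ) * (cexp (-(I * t)) - cexp (I * t)) / 2) * Complex.I_sq

lemma summable_norm_besselJ_mul_exp (x t : ℝ) :
    Summable fun n : ℤ => ‖(besselJ n x : ℂ) * cexp (I * n * t)‖ :=
  (summable_norm_besselJ x).congr fun n => by simp [Complex.norm_exp]

lemma fourierCoeffOn_two_pi (f : ℝ → ℂ) (l : ℤ) :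
    fourierCoeffOn two_pi_pos f l =
      (2 * π : ℂ)⁻¹ * ∫ t in (0 : ℝ)..2 * π, cexp (-(I * l * t)) * f t := by
  rw [fourierCoeffOn_eq_integral, sub_zero, one_div, Complex.real_smul]
  push_cast
  congr 1
  refine intervalIntegral.integral_congr fun t _ => ?_
  rw [fourier_coe_apply, smul_eq_mul]
  congr 2
  field_simp
  push_cast
  ring

lemma integral_exp_I_mul_int_mul (n : ℤ) :
    ∫ t in (0 : ℝ)..2 * π, cexp (I * n * t) = if n = 0 then (2 * π : ℂ) else 0 := by
  split_ifs with hn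
  · simp [hn]
  · have hc : I * n ≠ 0 := mul_ne_zero Complex.I_ne_zero (Int.cast_ne_zero.mpr hn)
    rw [integral_exp_mul_complex hc, show I * n * ((2 * π : ℝ) : ℂ) = n * (2 * π * I) by
      push_cast; ring, Complex.exp_int_mul_two_pi_mul_I]
    simp

theorem hasSum_fourierCoeffOn_of_hasSum {ι : Type*} [Countable ι] {a : ι → ℂ} (ν : ι → ℤ)
    {f : ℝ → ℂ} (ha : Summable fun i => ‖a i‖)
    (hf : ∀ t : ℝ, HasSum (fun i => a i * cexp (I * ν i * t)) (f t)) (l : ℤ) :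
    HasSum (fun i => if ν i = l then a i else 0) (fourierCoeffOn two_pi_pos f l) := by
  have h := intervalIntegral.hasSum_integral_of_dominated_convergence (a := 0) (b := 2 * π)
    (μ := MeasureTheory.volume)
    (F := fun i t => cexp (-(I * l * t)) * (a i * cexp (I * ν i * t))) (fun i _ => ‖a i‖)
    (fun i => (by fun_prop : Continuous _).aestronglyMeasurable)
    (fun i => .of_forall fun t _ => by simp [Complex.norm_exp])
    (.of_forall fun _ _ => ha) intervalIntegrable_const
    (.of_forall fun t _ => (hf t).mul_left _)
  rw [fourierCoeffOn_two_pi]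
  refine (h.mul_left (2 * π : ℂ)⁻¹).congr_fun fun i => ?_
  have hexp : ∀ t : ℝ, cexp (-(I * l * t)) * (a i * cexp (I * ν i * t)) =
      a i * cexp (I * (ν i - l : ℤ) * t) := fun t => by
    rw [mul_left_comm, ← Complex.exp_add]; push_cast; ring_nf
  simp_rw [hexp, intervalIntegral.integral_const_mul, integral_exp_I_mul_int_mul, sub_eq_zero]
  split_ifs
  · field_simp
  · simp

theorem fourierCoeffOn_eq_of_hasSum {a : ℤ → ℂ} {f : ℝ → ℂ} (ha : Summable fun n => ‖a n‖)
    (hf : ∀ t : ℝ, HasSum (fun n => a n * cexp (I * n * t)) (f t)) (l : ℤ) :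
    fourierCoeffOn two_pi_pos f l = a l := by
  refine (hasSum_fourierCoeffOn_of_hasSum id ha hf l).unique
    ((hasSum_ite_eq l (a l)).congr_fun fun n => ?_)
  split_ifs with h <;> simp_all

lemma mul_sin_add_mul_sin_sub (u α t : ℝ) :
    u * Real.sin t + u * Real.sin (α - t) =
      2 * u * Real.sin (α / 2) * Real.sin (t + (π / 2 - α / 2)) := by
  rw [show α - t = 2 * (α / 2) - t by ring, Real.sin_sub, Real.sin_two_mul, Real.cos_two_mul,
    Real.sin_add, Real.sin_pi_div_two_sub, Real.cos_pi_div_two_sub]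
  linear_combination (-(2 * u * Real.sin t)) * Real.sin_sq_add_cos_sq (α / 2)

theorem hasSum_besselJ_mul_besselJ_mul_exp (u α t : ℝ) :
    HasSum (fun p : ℤ × ℤ =>
      (besselJ p.1 u * besselJ p.2 u * cexp (I * p.2 * α) : ℂ) * cexp (I * (p.1 - p.2 : ℤ) * t))
      (cexp (I * u * Real.sin t) * cexp (I * u * Real.sin (α - t))) := by
  refine ((hasSum_besselJ_mul_exp u t).mul (hasSum_besselJ_mul_exp u (α - t))
    ((summable_norm_besselJ_mul_exp u t).mul_norm
      (summable_norm_besselJ_mul_exp u (α - t))).of_norm).congr_fun fun p => ?_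
  have hexp : cexp (I * p.1 * t) * cexp (I * p.2 * (α - t : ℝ)) =
      cexp (I * p.2 * α) * cexp (I * (p.1 - p.2 : ℤ) * t) := by
    rw [← Complex.exp_add, ← Complex.exp_add]; push_cast; ring_nf
  linear_combination (-(besselJ p.1 u * besselJ p.2 u : ℂ)) * hexp

theorem hasSum_besselJ_add_mul_besselJ_mul_exp (u α : ℝ) (l : ℤ) :
    HasSum (fun m : ℤ => (besselJ (m + l) u : ℂ) * besselJ m u * cexp (I * m * α))
      (I ^ l * cexp (-(I * l * α) / 2) * besselJ l (2 * u * Real.sin (α / 2))) := by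
  set b := 2 * u * Real.sin (α / 2)
  set c₀ := π / 2 - α / 2
  have hsingle : ∀ t : ℝ, HasSum (fun n : ℤ =>
      (besselJ n b * cexp (I * n * c₀) : ℂ) * cexp (I * n * t))
      (cexp (I * u * Real.sin t) * cexp (I * u * Real.sin (α - t))) := fun t => by
    have hsin : ((b * Real.sin (t + c₀) : ℝ) : ℂ) = u * Real.sin t + u * Real.sin (α - t) := by
      exact_mod_cast (mul_sin_add_mul_sin_sub u α t).symm
    rw [← Complex.exp_add, show I * u * Real.sin t + I * u * Real.sin (α - t) =
        I * b * Real.sin (t + c₀) by push_cast at hsin ⊢; linear_combination -I * hsin]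
    refine (hasSum_besselJ_mul_exp b (t + c₀)).congr_fun fun n => ?_
    push_cast; rw [mul_assoc, ← Complex.exp_add]; ring_nf
  -- both sides are the `l`-th Fourier coefficient of `t ↦ exp (i u sin t) exp (i u sin (α - t))`
  have hcoeff := hasSum_fourierCoeffOn_of_hasSum (fun p : ℤ × ℤ => p.1 - p.2)
    (((summable_norm_besselJ u).mul_norm (summable_norm_besselJ u)).congr fun p => by
      simp [Complex.norm_exp]) (hasSum_besselJ_mul_besselJ_mul_exp u α) l
  have hdiag : Function.Injective fun m : ℤ => (m + l, m) := fun m m' h => (Prod.ext_iff.mp h).2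
  have hc₀ : cexp (I * l * c₀) = I ^ l * cexp (-(I * l * α) / 2) := by
    rw [show I * l * c₀ = l * (π / 2 * I) + -(I * l * α) / 2 by simp only [c₀]; push_cast; ring,
      Complex.exp_add, Complex.exp_int_mul, Complex.exp_pi_div_two_mul_I]
  rw [fourierCoeffOn_eq_of_hasSum ((summable_norm_besselJ b).congr fun p => by
      simp [Complex.norm_exp]) hsingle l, hc₀, mul_comm (besselJ l b : ℂ),
    ← hdiag.hasSum_iff fun p hp => if_neg fun hpl => hp ⟨p.2, by ext <;> simp; omega⟩] at hcoeff
  exact hcoeff.congr_fun fun m => (if_pos (by ring)).symm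

theorem hasSum_besselJ_sq_sub_mul_exp (u α : ℝ) :
    HasSum (fun m : ℤ =>
        ((besselJ m u : ℂ) ^ 2 - besselJ (m - 1) u * besselJ (m + 1) u) * cexp (I * m * α))
      (besselJ 0 (2 * u * Real.sin (α / 2)) + besselJ 2 (2 * u * Real.sin (α / 2))) := by
  set b := 2 * u * Real.sin (α / 2)
  have h₀ := hasSum_besselJ_add_mul_besselJ_mul_exp u α 0
  simp only [add_zero, zpow_zero, Int.cast_zero, mul_zero, zero_mul, neg_zero, zero_div,
    Complex.exp_zero, one_mul] at h₀
  have h₂ := (Equiv.subRight (1 : ℤ)).hasSum_iff.mpr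
    (hasSum_besselJ_add_mul_besselJ_mul_exp u α 2) |>.mul_left (cexp (I * α))
  have hval : cexp (I * α) * (I ^ (2 : ℤ) * cexp (-(I * (2 : ℤ) * α) / 2) * besselJ 2 b) =
      -besselJ 2 b := by
    rw [zpow_two, Complex.I_mul_I, ← mul_assoc, mul_left_comm, ← Complex.exp_add,
      show I * α + -(I * (2 : ℤ) * α) / 2 = 0 by push_cast; ring, Complex.exp_zero]
    ring
  rw [hval] at h₂
  rw [← sub_neg_eq_add]
  refine (h₀.sub h₂).congr_fun fun m => ?_
  have hexp : cexp (I * α) * cexp (I * (m - 1 : ℤ) * α) = cexp (I * m * α) := by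
    rw [← Complex.exp_add]; push_cast; ring_nf
  rw [Function.comp_apply, Equiv.subRight_apply, show m - 1 + 2 = m + 1 by ring, ← hexp]
  ring

noncomputable def farFieldPhase (θd θx : ℝ) (n m : ℤ) : ℂ :=
  I ^ (m - n) * cexp (-I * m * θd) * cexp (I * n * θx)

/-- The coefficient `W_{nm}` of the statement is `scatteringCoeff C₁ C₂ a c n m` with
`a n = J_n(kR)`, `C₁ = πεk²R²` and `C₂ = 2πRδεk²`. -/
def scatteringCoeff (C₁ C₂ : ℂ) (a c : ℤ → ℂ) (n m : ℤ) : ℂ :=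
  C₁ * (if n = m then 1 else 0) * (a n ^ 2 - a (n - 1) * a (n + 1)) + C₂ * a n * a m * c (n - m)

lemma norm_farFieldPhase (θd θx : ℝ) (n m : ℤ) : ‖farFieldPhase θd θx n m‖ = 1 := by
  simp [farFieldPhase, Complex.norm_exp]

lemma farFieldPhase_add_self (θd θx : ℝ) (l m : ℤ) :
    farFieldPhase θd θx (m + l) m =
      I ^ (-l) * cexp (I * l * θx) * cexp (I * m * (θx - θd : ℝ)) := by
  simp only [farFieldPhase, show m - (m + l) = -l by ring, mul_assoc, ← Complex.exp_add]
  congr 2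
  push_cast; ring

lemma farFieldPhase_self (θd θx : ℝ) (m : ℤ) :
    farFieldPhase θd θx m m = cexp (I * m * (θx - θd : ℝ)) := by
  simpa using farFieldPhase_add_self θd θx 0 m

lemma summable_norm_scatteringCoeff {a c : ℤ → ℂ} (ha : Summable fun n => ‖a n‖) {B : ℝ}
    (hc : ∀ l, ‖c l‖ ≤ B) (C₁ C₂ : ℂ) :
    Summable fun p : ℤ × ℤ => ‖scatteringCoeff C₁ C₂ a c p.1 p.2‖ := by
  have hprod : Summable fun p : ℤ × ℤ => ‖a p.1‖ * ‖a p.2‖ := by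
    simpa only [norm_mul] using ha.mul_norm ha
  have hdiag : Function.Injective fun n : ℤ => (n, n) := fun n n' h => (Prod.ext_iff.mp h).1
  have hshift : Function.Injective fun n : ℤ => (n - 1, n + 1) :=
    fun n n' h => by simpa using (Prod.ext_iff.mp h).1
  have hdiagPart : Summable fun p : ℤ × ℤ =>
      if p.1 = p.2 then ‖a p.1‖ * ‖a p.1‖ + ‖a (p.1 - 1)‖ * ‖a (p.1 + 1)‖ else 0 := by
    refine (hdiag.summable_iff fun p hp => if_neg fun h => hp ⟨p.1, by ext <;> simp [h]⟩).mp ?_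
    exact ((hprod.comp_injective hdiag).add (hprod.comp_injective hshift)).congr fun n => by simp
  refine .of_nonneg_of_le (fun _ => norm_nonneg _) (fun p => ?_)
    ((hdiagPart.mul_left ‖C₁‖).add (hprod.mul_left (‖C₂‖ * B)))
  refine (norm_add_le _ _).trans (add_le_add ?_ ?_)
  · split_ifs <;> simp only [norm_mul, mul_one, mul_zero, zero_mul, norm_zero, le_refl]
    gcongr
    refine (norm_sub_le _ _).trans ?_
    simp only [norm_mul, sq, le_refl]
  · have := hc (p.1 - p.2)
    simp only [norm_mul]
    calc ‖C₂‖ * ‖a p.1‖ * ‖a p.2‖ * ‖c (p.1 - p.2)‖ ≤ ‖C₂‖ * ‖a p.1‖ * ‖a p.2‖ * B := by gcongr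
      _ = _ := by ring

theorem hasSum_farFieldPhase_mul_scatteringCoeff (u θd θx : ℝ) (C₁ C₂ : ℂ) (c : ℤ → ℂ) (l : ℤ) :
    HasSum (fun m : ℤ => farFieldPhase θd θx (m + l) m *
        scatteringCoeff C₁ C₂ (fun n => (besselJ n u : ℂ)) c (m + l) m)
      ((if l = 0 then C₁ * (besselJ 0 (2 * u * Real.sin ((θx - θd) / 2)) +
          besselJ 2 (2 * u * Real.sin ((θx - θd) / 2))) else 0) +
        C₂ * (cexp (I * l * (θx + θd) / 2) * besselJ l (2 * u * Real.sin ((θx - θd) / 2)) *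
          c l)) := by
  have hsplit : ∀ m : ℤ, farFieldPhase θd θx (m + l) m *
      scatteringCoeff C₁ C₂ (fun n => (besselJ n u : ℂ)) c (m + l) m =
      farFieldPhase θd θx (m + l) m * (C₁ * (if l = 0 then 1 else 0) *
        ((besselJ (m + l) u : ℂ) ^ 2 - besselJ (m + l - 1) u * besselJ (m + l + 1) u)) +
      farFieldPhase θd θx (m + l) m * (C₂ * besselJ (m + l) u * besselJ m u * c l) := fun m => by
    simp only [scatteringCoeff, add_sub_cancel_left, add_eq_left, mul_add]
  refine (HasSum.add ?_ ?_).congr_fun hsplit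
  · split_ifs with hl
    · subst hl
      refine ((hasSum_besselJ_sq_sub_mul_exp u (θx - θd)).mul_left C₁).congr_fun fun m => ?_
      simp only [add_zero, farFieldPhase_self]
      ring
    · simp
  · have hval : (C₂ * c l * I ^ (-l) * cexp (I * l * θx)) *
        (I ^ l * cexp (-(I * l * (θx - θd : ℝ)) / 2) *
          besselJ l (2 * u * Real.sin ((θx - θd) / 2))) =
        C₂ * (cexp (I * l * (θx + θd) / 2) * besselJ l (2 * u * Real.sin ((θx - θd) / 2)) *
          c l) := by
      rw [show cexp (I * l * (θx + θd) / 2) =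
          cexp (I * l * θx) * cexp (-(I * l * (θx - θd : ℝ)) / 2) by
        rw [← Complex.exp_add]; push_cast; ring_nf]
      rw [show I ^ (-l) = (I ^ l)⁻¹ from zpow_neg I l]
      field_simp
    refine (hval ▸ (hasSum_besselJ_add_mul_besselJ_mul_exp u (θx - θd) l).mul_left
      (C₂ * c l * I ^ (-l) * cexp (I * l * θx))).congr_fun fun m => ?_
    rw [farFieldPhase_add_self]
    ring

def shearEquiv : ℤ × ℤ ≃ ℤ × ℤ where
  toFun p := (p.2 + p.1, p.2)
  invFun q := (q.1 - q.2, q.2)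
  left_inv p := by simp
  right_inv q := by simp

theorem Summable.tsum_eq_tsum_diagonals {E : Type*} [AddCommGroup E] [UniformSpace E]
    [IsUniformAddGroup E] [CompleteSpace E] [T0Space E] {f : ℤ × ℤ → E} (hf : Summable f) :
    ∑' p, f p = ∑' l : ℤ, ∑' m : ℤ, f (m + l, m) := by
  rw [← shearEquiv.tsum_eq]
  exact (shearEquiv.summable_iff.mpr hf).tsum_prod

theorem linearized_far_field_expansion_general (k R ε δ θd θx : ℝ)
    (c : ℤ → ℂ) (hc : ∃ B : ℝ, ∀ l : ℤ, ‖c l‖ ≤ B)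
    (W : ℤ → ℤ → ℂ)
    (hW : ∀ n m : ℤ, W n m =
      (π : ℂ) * (ε : ℂ) * (k : ℂ) ^ 2 * (R : ℂ) ^ 2 * (if n = m then 1 else 0) *
        (((besselJ n (k * R) : ℂ)) ^ 2 -
          (besselJ (n - 1) (k * R) : ℂ) * (besselJ (n + 1) (k * R) : ℂ))
      + 2 * (π : ℂ) * (R : ℂ) * (δ : ℂ) * (ε : ℂ) * (k : ℂ) ^ 2 *
          (besselJ n (k * R) : ℂ) * (besselJ m (k * R) : ℂ) * c (n - m)) :
    Summable (fun p : ℤ × ℤ =>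
      ‖Complex.I ^ (p.2 - p.1) * Complex.exp (-Complex.I * (p.2 : ℂ) * (θd : ℂ)) *
        Complex.exp (Complex.I * (p.1 : ℂ) * (θx : ℂ)) * W p.1 p.2‖) ∧
    ∑' p : ℤ × ℤ, Complex.I ^ (p.2 - p.1) * Complex.exp (-Complex.I * (p.2 : ℂ) * (θd : ℂ)) *
        Complex.exp (Complex.I * (p.1 : ℂ) * (θx : ℂ)) * W p.1 p.2
      = (π : ℂ) * (R : ℂ) ^ 2 * (ε : ℂ) * (k : ℂ) ^ 2 *
          ((besselJ 0 (2 * k * R * Real.sin ((θx - θd) / 2)) : ℂ) +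
            (besselJ 2 (2 * k * R * Real.sin ((θx - θd) / 2)) : ℂ))
        + 2 * (π : ℂ) * (R : ℂ) * (δ : ℂ) * (ε : ℂ) * (k : ℂ) ^ 2 *
            ∑' l : ℤ, Complex.exp (Complex.I * (l : ℂ) * ((θx : ℂ) + (θd : ℂ)) / 2) *
              (besselJ l (2 * k * R * Real.sin ((θx - θd) / 2)) : ℂ) * c l := by
  obtain ⟨B, hB⟩ := hc
  set C₁ : ℂ := π * ε * k ^ 2 * R ^ 2
  set C₂ : ℂ := 2 * π * R * δ * ε * k ^ 2
  obtain rfl : W = scatteringCoeff C₁ C₂ (fun n => (besselJ n (k * R) : ℂ)) c := funext₂ hW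
  change Summable (fun p : ℤ × ℤ => ‖farFieldPhase θd θx p.1 p.2 * _‖) ∧
    ∑' p : ℤ × ℤ, farFieldPhase θd θx p.1 p.2 * _ = _
  have hsum : Summable fun p : ℤ × ℤ => ‖farFieldPhase θd θx p.1 p.2 *
      scatteringCoeff C₁ C₂ (fun n => (besselJ n (k * R) : ℂ)) c p.1 p.2‖ := by
    simpa only [norm_mul, norm_farFieldPhase, one_mul] using summable_norm_scatteringCoeff
      ((summable_norm_besselJ (k * R)).congr fun n => by simp) hB C₁ C₂
  refine ⟨hsum, ?_⟩
  have hseries : Summable fun l : ℤ => cexp (I * l * (θx + θd) / 2) *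
      besselJ l (2 * (k * R) * Real.sin ((θx - θd) / 2)) * c l :=
    .of_norm_bounded ((summable_norm_besselJ _).mul_right B) fun l => by
      simpa [Complex.norm_exp] using mul_le_mul_of_nonneg_left (hB l) (abs_nonneg _)
  rw [hsum.of_norm.tsum_eq_tsum_diagonals, tsum_congr fun l =>
      (hasSum_farFieldPhase_mul_scatteringCoeff (k * R) θd θx C₁ C₂ c l).tsum_eq,
    Summable.tsum_add (hasSum_ite_eq 0 _).summable (hseries.mul_left C₂), tsum_ite_eq,
    tsum_mul_left, show 2 * k * R = 2 * (k * R) by ring]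
  simp only [C₁]
  ring

/-- The linearized far-field expansion: for the linearized scattering coefficients
`W_{nm}` of a perturbed disk, the double far-field series
`Σ_{n,m} i^{m−n} e^{−imθ_d} e^{inθ_x} W_{nm}` converges absolutely and equals
`πR²εk²(J_0(b)+J_2(b)) + 2πRδεk² Σ_l e^{il(θ_x+θ_d)/2} J_l(b) c_l`,
where `b = 2kR sin((θ_x−θ_d)/2)`. -/
theorem linearized_far_field_expansion (k R ε δ θd θx : ℝ) (hk : 0 < k) (hR : 0 < R)
    (c : ℤ → ℂ) (hc : ∃ B : ℝ, ∀ l : ℤ, ‖c l‖ ≤ B)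
    (W : ℤ → ℤ → ℂ)
    (hW : ∀ n m : ℤ, W n m =
      (π : ℂ) * (ε : ℂ) * (k : ℂ) ^ 2 * (R : ℂ) ^ 2 * (if n = m then 1 else 0) *
        (((besselJ n (k * R) : ℂ)) ^ 2 -
          (besselJ (n - 1) (k * R) : ℂ) * (besselJ (n + 1) (k * R) : ℂ))
      + 2 * (π : ℂ) * (R : ℂ) * (δ : ℂ) * (ε : ℂ) * (k : ℂ) ^ 2 *
          (besselJ n (k * R) : ℂ) * (besselJ m (k * R) : ℂ) * c (n - m)) :
    Summable (fun p : ℤ × ℤ =>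
      ‖Complex.I ^ (p.2 - p.1) * Complex.exp (-Complex.I * (p.2 : ℂ) * (θd : ℂ)) *
        Complex.exp (Complex.I * (p.1 : ℂ) * (θx : ℂ)) * W p.1 p.2‖) ∧
    ∑' p : ℤ × ℤ, Complex.I ^ (p.2 - p.1) * Complex.exp (-Complex.I * (p.2 : ℂ) * (θd : ℂ)) *
        Complex.exp (Complex.I * (p.1 : ℂ) * (θx : ℂ)) * W p.1 p.2
      = (π : ℂ) * (R : ℂ) ^ 2 * (ε : ℂ) * (k : ℂ) ^ 2 *
          ((besselJ 0 (2 * k * R * Real.sin ((θx - θd) / 2)) : ℂ) +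
            (besselJ 2 (2 * k * R * Real.sin ((θx - θd) / 2)) : ℂ))
        + 2 * (π : ℂ) * (R : ℂ) * (δ : ℂ) * (ε : ℂ) * (k : ℂ) ^ 2 *
            ∑' l : ℤ, Complex.exp (Complex.I * (l : ℂ) * ((θx : ℂ) + (θd : ℂ)) / 2) *
              (besselJ l (2 * k * R * Real.sin ((θx - θd) / 2)) : ℂ) * c l :=
  linearized_far_field_expansion_general k R ε δ θd θx c hc W hW
end
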